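/- Every consistent set R of rooted triples on leaf set L is contained in a strictly dense consistent set R' of rooted triples on L. -/

import Mathlib

namespace Phylo

/-- Rooted trees with leaves labeled by `L`. -/
inductive T (L : Type) where
  | leaf (x : L) : T L
  | node (ts : List (T L)) : T L

/-- `Subtree s t`: `s` is the subtree of `t` rooted at some vertex of `t`. -/
inductive Subtree {L : Type} : T L → T L → Prop where
  | refl (t : T L) : Subtree t t
  | child {s u : T L} {ts : List (T L)} : s ∈ ts → Subtree u s → Subtree u (T.node ts)

/-- The list of leaf labels of a tree. -/
def leafList {L : Type} : T L → List L
  | T.leaf x => [x]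
  | T.node ts => (ts.attach.map (fun s => leafList s.1)).flatten
decreasing_by all_goals (simp_wf; have := List.sizeOf_lt_of_mem s.2; omega)

/-- A phylogenetic tree: every inner vertex has at least two children. -/
inductive IsPhylo {L : Type} : T L → Prop where
  | leaf (x : L) : IsPhylo (T.leaf x)
  | node {ts : List (T L)} : 2 ≤ ts.length → (∀ t ∈ ts, IsPhylo t) → IsPhylo (T.node ts)

/-- A phylogenetic tree with pairwise distinct leaf labels. -/
def PhyloTree {L : Type} (t : T L) : Prop := IsPhylo t ∧ (leafList t).Nodup

/-- A binary tree: every inner vertex has exactly two children. -/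
inductive BinaryT {L : Type} : T L → Prop where
  | leaf (x : L) : BinaryT (T.leaf x)
  | node {ts : List (T L)} : ts.length = 2 → (∀ t ∈ ts, BinaryT t) → BinaryT (T.node ts)

def numVertices {L : Type} : T L → ℕ
  | T.leaf _ => 1
  | T.node ts => 1 + (ts.attach.map (fun s => numVertices s.1)).sum
decreasing_by all_goals (simp_wf; have := List.sizeOf_lt_of_mem s.2; omega)

def numLeaves {L : Type} : T L → ℕ
  | T.leaf _ => 1
  | T.node ts => (ts.attach.map (fun s => numLeaves s.1)).sum
decreasing_by all_goals (simp_wf; have := List.sizeOf_lt_of_mem s.2; omega)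

def numInner {L : Type} : T L → ℕ
  | T.leaf _ => 0
  | T.node ts => 1 + (ts.attach.map (fun s => numInner s.1)).sum
decreasing_by all_goals (simp_wf; have := List.sizeOf_lt_of_mem s.2; omega)

/-- `C` is a cluster of `t`: the set of leaves below some vertex of `t`. -/
def IsCluster {L : Type} (t : T L) (C : Set L) : Prop :=
  ∃ s, Subtree s t ∧ ∀ x, x ∈ leafList s ↔ x ∈ C

def clusterSet {L : Type} (t : T L) : Set (Set L) := {C | IsCluster t C}

/-- The tree `t` displays the rooted triple `(ab|c)`. -/
def Displays {L : Type} (t : T L) (a b c : L) : Prop :=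
  a ≠ b ∧ a ≠ c ∧ b ≠ c ∧ a ∈ leafList t ∧ b ∈ leafList t ∧ c ∈ leafList t ∧
    ∃ s, Subtree s t ∧ a ∈ leafList s ∧ b ∈ leafList s ∧ c ∉ leafList s

/-- A rooted triple `(ab|c)`. -/
structure Trip (L : Type) where
  a : L
  b : L
  c : L

def Trip.proper {L : Type} (r : Trip L) : Prop := r.a ≠ r.b ∧ r.a ≠ r.c ∧ r.b ≠ r.c

def DisplaysT {L : Type} (t : T L) (r : Trip L) : Prop := Displays t r.a r.b r.c

def DisplaysAll {L : Type} (t : T L) (R : Set (Trip L)) : Prop := ∀ r ∈ R, DisplaysT t r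

def tripLeaves {L : Type} (r : Trip L) : Set L := {r.a, r.b, r.c}

/-- The leaf set `L_R` of a triple set. -/
def leafSetR {L : Type} (R : Set (Trip L)) : Set L := ⋃ r ∈ R, tripLeaves r

/-- `t` is a phylogenetic tree on the leaf set `L_R` displaying all triples of `R`. -/
def IsTreeFor {L : Type} (t : T L) (R : Set (Trip L)) : Prop :=
  PhyloTree t ∧ (∀ x, x ∈ leafList t ↔ x ∈ leafSetR R) ∧ DisplaysAll t R

/-- `R` is consistent: some phylogenetic tree on `L_R` displays all triples of `R`. -/
def Consistent {L : Type} (R : Set (Trip L)) : Prop := ∃ t, IsTreeFor t R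

/-- `R` is consistent relative to the leaf set `S`. -/
def ConsistentOn {L : Type} (R : Set (Trip L)) (S : Set L) : Prop :=
  ∃ t : T L, PhyloTree t ∧ (∀ x, x ∈ leafList t ↔ x ∈ S) ∧ DisplaysAll t R

/-- The closure of `R`: all triples displayed by every phylogenetic tree on `L_R`
displaying `R`. -/
def cl {L : Type} (R : Set (Trip L)) : Set (Trip L) :=
  {r | ∀ t : T L, IsTreeFor t R → DisplaysT t r}

/-- Membership of the (unordered) rooted triple `(xy|z)` in `R`. -/
def MemS {L : Type} (R : Set (Trip L)) (x y z : L) : Prop :=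
  Trip.mk x y z ∈ R ∨ Trip.mk y x z ∈ R

/-- All triples of `R` have pairwise distinct leaves taken from `S`. -/
def ProperOn {L : Type} (R : Set (Trip L)) (S : Set L) : Prop :=
  ∀ r ∈ R, r.a ∈ S ∧ r.b ∈ S ∧ r.c ∈ S ∧ r.proper

/-- `R` is dense on `S`: each 3-element subset of `S` carries at least one triple of `R`. -/
def DenseOn {L : Type} (R : Set (Trip L)) (S : Set L) : Prop :=
  ProperOn R S ∧ ∀ x y z : L, x ∈ S → y ∈ S → z ∈ S → x ≠ y → x ≠ z → y ≠ z →
    (MemS R x y z ∨ MemS R x z y ∨ MemS R y z x)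

/-- `R` is strictly dense on `S`: each 3-element subset of `S` carries exactly one
of the three possible rooted triples. -/
def StrictlyDense {L : Type} (R : Set (Trip L)) (S : Set L) : Prop :=
  ProperOn R S ∧ ∀ x y z : L, x ∈ S → y ∈ S → z ∈ S → x ≠ y → x ≠ z → y ≠ z →
    ((MemS R x y z ∧ ¬ MemS R x z y ∧ ¬ MemS R y z x) ∨
     (¬ MemS R x y z ∧ MemS R x z y ∧ ¬ MemS R y z x) ∨
     (¬ MemS R x y z ∧ ¬ MemS R x z y ∧ MemS R y z x))

/-- The Aho graph `[R, S]`: vertices `S`, edges `{x,y}` for triples `(xy|z) ∈ R`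
with `x,y,z ∈ S`. -/
def ahoGraph {L : Type} (R : Set (Trip L)) (S : Set L) : SimpleGraph S where
  Adj x y := x ≠ y ∧ ∃ r ∈ R, (r.c ∈ S) ∧
      ((r.a = (x : L) ∧ r.b = (y : L)) ∨ (r.a = (y : L) ∧ r.b = (x : L)))
  symm := by
    constructor
    rintro x y ⟨hxy, r, hr, hc, h⟩
    exact ⟨hxy.symm, r, hr, hc, h.symm⟩
  loopless := by constructor; rintro x ⟨h, -⟩; exact h rfl


-- AUX START

theorem leafList_node {L : Type} (ts : List (T L)) :
    leafList (T.node ts) = (ts.map leafList).flatten := by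
  rw [leafList]
  congr 1
  simp [List.attach_map_val]

def comb {L : Type} : List (T L) → T L
  | [] => T.node []
  | [t] => t
  | t :: u :: ts => T.node [t, comb (u :: ts)]

theorem leafList_comb {L : Type} : ∀ l : List (T L),
    leafList (comb l) = (l.map leafList).flatten
  | [] => by simp [comb, leafList_node]
  | [t] => by simp [comb]
  | t :: u :: ts => by
      rw [comb, leafList_node]
      simp [leafList_comb (u :: ts)]

theorem comb_binary {L : Type} : ∀ l : List (T L), l ≠ [] →
    (∀ t ∈ l, BinaryT t) → BinaryT (comb l)
  | [], h, _ => absurd rfl h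
  | [t], _, hall => by rw [comb]; exact hall t (by simp)
  | t :: u :: ts, _, hall => by
      rw [comb]
      refine BinaryT.node rfl ?_
      intro s hs
      simp only [List.mem_cons, List.mem_singleton] at hs
      rcases hs with rfl | hs
      · exact hall s (by simp)
      · simp at hs; subst hs
        exact comb_binary (u :: ts) (by simp) (fun w hw => hall w (List.mem_cons_of_mem _ hw))

theorem comb_subtree {L : Type} : ∀ (l : List (T L)) (t : T L), t ∈ l → Subtree t (comb l)
  | [], t, h => by simp at h
  | [u], t, h => by simp at h; subst h; rw [comb]; exact Subtree.refl t
  | u :: v :: ts, t, h => by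
      rw [comb]
      rcases List.mem_cons.1 h with rfl | h
      · exact Subtree.child (by simp) (Subtree.refl t)
      · exact Subtree.child (ts := [u, comb (v :: ts)]) (by simp)
          (comb_subtree (v :: ts) t h)

def refine {L : Type} : T L → T L
  | T.leaf x => T.leaf x
  | T.node ts => comb (ts.attach.map (fun s => refine s.1))
decreasing_by all_goals (simp_wf; have := List.sizeOf_lt_of_mem s.2; omega)

theorem refine_node {L : Type} (ts : List (T L)) :
    refine (T.node ts) = comb (ts.map refine) := by
  rw [refine]
  congr 1
  simp [List.attach_map_val]

theorem leafList_refine {L : Type} : ∀ t : T L, leafList (refine t) = leafList t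
  | T.leaf x => by rw [refine]
  | T.node ts => by
      rw [refine_node, leafList_comb, leafList_node, List.map_map]
      congr 1
      exact List.map_congr_left fun s hs => by
        have := List.sizeOf_lt_of_mem hs
        exact leafList_refine s
termination_by t => sizeOf t
decreasing_by simp_wf; omega

theorem refine_binary {L : Type} {t : T L} (h : IsPhylo t) : BinaryT (refine t) := by
  induction h with
  | leaf x => rw [refine]; exact BinaryT.leaf x
  | @node ts hlen hall ih =>
      rw [refine_node]
      apply comb_binary
      · intro he
        have : ts.length = 0 := by simpa using congrArg List.length he
        omega
      · intro s hs
        obtain ⟨u, hu, rfl⟩ := List.mem_map.1 hs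
        exact ih u hu

theorem subtree_trans {L : Type} {u s t : T L} (h1 : Subtree u s) (h2 : Subtree s t) :
    Subtree u t := by
  induction h2 generalizing u with
  | refl => exact h1
  | child hmem _ ih => exact Subtree.child hmem (ih h1)

theorem subtree_refine {L : Type} {s t : T L} (h : Subtree s t) :
    Subtree (refine s) (refine t) := by
  induction h with
  | refl => exact Subtree.refl _
  | @child c u ts hmem hsub ih =>
      rw [refine_node]
      exact subtree_trans ih (comb_subtree _ _ (List.mem_map_of_mem (f := refine) hmem))

theorem subtree_leaf_subset {L : Type} {s t : T L} (h : Subtree s t) :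
    ∀ x ∈ leafList s, x ∈ leafList t := by
  induction h with
  | refl => exact fun x hx => hx
  | @child c u ts hmem hsub ih =>
      intro x hx
      rw [leafList_node, List.mem_flatten]
      exact ⟨leafList c, List.mem_map_of_mem (f := leafList) hmem, ih x hx⟩

theorem children_nodup {L : Type} {ts : List (T L)} (hn : (leafList (T.node ts)).Nodup)
    {c : T L} (hc : c ∈ ts) : (leafList c).Nodup := by
  rw [leafList_node, List.nodup_flatten] at hn
  exact hn.1 _ (List.mem_map_of_mem (f := leafList) hc)

theorem children_disjoint {L : Type} {ts : List (T L)} (hn : (leafList (T.node ts)).Nodup)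
    {c1 c2 : T L} (h1 : c1 ∈ ts) (h2 : c2 ∈ ts) (hne : c1 ≠ c2) :
    ∀ x ∈ leafList c1, x ∉ leafList c2 := by
  rw [leafList_node, List.nodup_flatten] at hn
  have hp := hn.2
  rw [List.pairwise_iff_getElem] at hp
  obtain ⟨i, hi, rfl⟩ := List.mem_iff_getElem.1 h1
  obtain ⟨j, hj, rfl⟩ := List.mem_iff_getElem.1 h2
  have hij : i ≠ j := by rintro rfl; exact hne rfl
  have hlen : (ts.map leafList).length = ts.length := by simp
  have key : List.Disjoint (leafList ts[i]) (leafList ts[j]) := by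
    rcases Nat.lt_or_ge i j with h | h
    · have := hp i j (by omega) (by omega) h
      simpa using this
    · have := hp j i (by omega) (by omega) (by omega)
      simp only [List.getElem_map] at this
      exact this.symm
  intro x hx hx2
  exact key hx hx2

/-- Any two subtrees of a nodup-leaf tree are nested or leaf-disjoint. -/
theorem subtrees_nested {L : Type} (t : T L) (hn : (leafList t).Nodup)
    (s1 s2 : T L) (h1 : Subtree s1 t) (h2 : Subtree s2 t) :
    (∀ x ∈ leafList s1, x ∈ leafList s2) ∨ (∀ x ∈ leafList s2, x ∈ leafList s1) ∨
      (∀ x ∈ leafList s1, x ∉ leafList s2) := by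
  have key : ∀ (n : ℕ) (t : T L), sizeOf t ≤ n → (leafList t).Nodup →
      ∀ s1 s2 : T L, Subtree s1 t → Subtree s2 t →
      (∀ x ∈ leafList s1, x ∈ leafList s2) ∨ (∀ x ∈ leafList s2, x ∈ leafList s1) ∨
        (∀ x ∈ leafList s1, x ∉ leafList s2) := by
    intro n
    induction n with
    | zero =>
        intro t ht
        exfalso
        cases t <;> simp at ht
    | succ n ih =>
        intro t ht hn s1 s2 h1 h2
        cases h1 with
        | refl => exact Or.inr (Or.inl (subtree_leaf_subset h2))
        | @child c1 _ ts hc1 hs1 =>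
          cases h2 with
          | refl =>
              exact Or.inl (subtree_leaf_subset (Subtree.child hc1 hs1))
          | @child c2 _ _ hc2 hs2 =>
              by_cases hcc : c1 = c2
              · subst hcc
                have hlt := List.sizeOf_lt_of_mem hc1
                have hsz : sizeOf (T.node ts) = 1 + sizeOf ts := by simp
                exact ih c1 (by omega) (children_nodup hn hc1) s1 s2 hs1 hs2
              · refine Or.inr (Or.inr ?_)
                intro x hx hx2
                exact children_disjoint hn hc1 hc2 hcc x
                  (subtree_leaf_subset hs1 x hx) (subtree_leaf_subset hs2 x hx2)
  exact key (sizeOf t) t le_rfl hn s1 s2 h1 h2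


theorem displays_mono {L : Type} {u t : T L} (hsub : Subtree u t) {x y z : L}
    (h : Displays u x y z) : Displays t x y z := by
  obtain ⟨h1, h2, h3, hx, hy, hz, s, hs, ha, hb, hc⟩ := h
  exact ⟨h1, h2, h3, subtree_leaf_subset hsub x hx, subtree_leaf_subset hsub y hy,
    subtree_leaf_subset hsub z hz, s, subtree_trans hs hsub, ha, hb, hc⟩

theorem displays_swap {L : Type} {t : T L} {x y z : L} (h : Displays t x y z) :
    Displays t y x z := by
  obtain ⟨h1, h2, h3, hx, hy, hz, s, hs, ha, hb, hc⟩ := h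
  exact ⟨h1.symm, h3, h2, hy, hx, hz, s, hs, hb, ha, hc⟩

theorem displays_refine {L : Type} {t : T L} {x y z : L} (h : Displays t x y z) :
    Displays (refine t) x y z := by
  obtain ⟨h1, h2, h3, hx, hy, hz, s, hs, ha, hb, hc⟩ := h
  refine ⟨h1, h2, h3, ?_, ?_, ?_, refine s, subtree_refine hs, ?_, ?_, ?_⟩ <;>
    rw [leafList_refine] <;> assumption

theorem binary_isPhylo {L : Type} {t : T L} (h : BinaryT t) : IsPhylo t := by
  induction h with
  | leaf x => exact IsPhylo.leaf x
  | node hlen _ ih => exact IsPhylo.node (by omega) ih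

theorem leafList_pair {L : Type} (u v : T L) :
    leafList (T.node [u, v]) = leafList u ++ leafList v := by
  rw [leafList_node]; simp

/-- Existence: a binary tree with nodup leaves displays some triple on any 3 leaves. -/
theorem binary_displays {L : Type} {t : T L} (hb : BinaryT t) (hn : (leafList t).Nodup)
    {x y z : L} (hxy : x ≠ y) (hxz : x ≠ z) (hyz : y ≠ z)
    (hx : x ∈ leafList t) (hy : y ∈ leafList t) (hz : z ∈ leafList t) :
    Displays t x y z ∨ Displays t x z y ∨ Displays t y z x := by
  induction hb with
  | leaf w =>
      simp [leafList] at hx hy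
      exact absurd (hx.trans hy.symm) hxy
  | @node ts hlen hall ih =>
      obtain ⟨u, v, rfl⟩ := List.length_eq_two.1 hlen
      rw [leafList_pair] at hn hx hy hz
      have hdisj : ∀ w ∈ leafList u, w ∉ leafList v := by
        have := (List.nodup_append.1 hn).2.2
        exact fun w hw hv => this w hw w hv rfl
      have hnu : (leafList u).Nodup := (List.nodup_append.1 hn).1
      have hnv : (leafList v).Nodup := (List.nodup_append.1 hn).2.1
      have hsu : Subtree u (T.node [u, v]) := Subtree.child (by simp) (Subtree.refl u)
      have hsv : Subtree v (T.node [u, v]) := Subtree.child (by simp) (Subtree.refl v)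
      -- generic: two leaves in a child s, third not in s → display
      have split : ∀ (s : T L), Subtree s (T.node [u, v]) → ∀ a b c : L,
          a ≠ b → a ≠ c → b ≠ c →
          a ∈ leafList s → b ∈ leafList s → c ∉ leafList s →
          c ∈ leafList (T.node [u, v]) → Displays (T.node [u, v]) a b c := by
        intro s hs a b c h1 h2 h3 ha hb hc hcm
        exact ⟨h1, h2, h3, subtree_leaf_subset hs a ha, subtree_leaf_subset hs b hb,
          hcm, s, hs, ha, hb, hc⟩
      have hmem : ∀ w : L, w ∈ leafList u ++ leafList v →
          w ∈ leafList (T.node [u, v]) := by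
        intro w hw; rw [leafList_pair]; exact hw
      rcases List.mem_append.1 hx with hxu | hxv <;>
        rcases List.mem_append.1 hy with hyu | hyv <;>
          rcases List.mem_append.1 hz with hzu | hzv
      · -- all in u
        rcases ih u (by simp) hnu hxu hyu hzu with h | h | h
        · exact Or.inl (displays_mono hsu h)
        · exact Or.inr (Or.inl (displays_mono hsu h))
        · exact Or.inr (Or.inr (displays_mono hsu h))
      · exact Or.inl (split u hsu x y z hxy hxz hyz hxu hyu (fun h => hdisj z h hzv)
          (hmem z (List.mem_append.2 (Or.inr hzv))))
      · exact Or.inr (Or.inl (split u hsu x z y hxz hxy (Ne.symm hyz) hxu hzu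
          (fun h => hdisj y h hyv) (hmem y (List.mem_append.2 (Or.inr hyv)))))
      · exact Or.inr (Or.inr (split v hsv y z x hyz (Ne.symm hxy) (Ne.symm hxz) hyv hzv
          (fun h => hdisj x hxu h) (hmem x (List.mem_append.2 (Or.inl hxu)))))
      · exact Or.inr (Or.inr (split u hsu y z x hyz (Ne.symm hxy) (Ne.symm hxz) hyu hzu
          (fun h => hdisj x h hxv) (hmem x (List.mem_append.2 (Or.inr hxv)))))
      · exact Or.inr (Or.inl (split v hsv x z y hxz hxy (Ne.symm hyz) hxv hzv
          (fun h => hdisj y hyu h) (hmem y (List.mem_append.2 (Or.inl hyu)))))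
      · exact Or.inl (split v hsv x y z hxy hxz hyz hxv hyv (fun h => hdisj z hzu h)
          (hmem z (List.mem_append.2 (Or.inl hzu))))
      · -- all in v
        rcases ih v (by simp) hnv hxv hyv hzv with h | h | h
        · exact Or.inl (displays_mono hsv h)
        · exact Or.inr (Or.inl (displays_mono hsv h))
        · exact Or.inr (Or.inr (displays_mono hsv h))

/-- Uniqueness core: crossing subtrees are impossible in a nodup-leaf tree. -/
theorem no_cross {L : Type} {t : T L} (hn : (leafList t).Nodup)
    {s1 s2 : T L} (h1 : Subtree s1 t) (h2 : Subtree s2 t)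
    {w p q : L} (hw1 : w ∈ leafList s1) (hw2 : w ∈ leafList s2)
    (hp1 : p ∈ leafList s1) (hp2 : p ∉ leafList s2)
    (hq2 : q ∈ leafList s2) (hq1 : q ∉ leafList s1) : False := by
  rcases subtrees_nested t hn s1 s2 h1 h2 with h | h | h
  · exact hp2 (h p hp1)
  · exact hq1 (h q hq2)
  · exact h w hw1 hw2

theorem displays_unique₁ {L : Type} {t : T L} (hn : (leafList t).Nodup) {x y z : L}
    (h1 : Displays t x y z) (h2 : Displays t x z y) : False := by
  obtain ⟨-, -, -, -, -, -, s1, hs1, ha1, hb1, hc1⟩ := h1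
  obtain ⟨-, -, -, -, -, -, s2, hs2, ha2, hb2, hc2⟩ := h2
  exact no_cross hn hs1 hs2 ha1 ha2 hb1 hc2 hb2 hc1

theorem displays_unique₂ {L : Type} {t : T L} (hn : (leafList t).Nodup) {x y z : L}
    (h1 : Displays t x y z) (h2 : Displays t y z x) : False := by
  obtain ⟨-, -, -, -, -, -, s1, hs1, ha1, hb1, hc1⟩ := h1
  obtain ⟨-, -, -, -, -, -, s2, hs2, ha2, hb2, hc2⟩ := h2
  exact no_cross hn hs1 hs2 hb1 ha2 ha1 hc2 hb2 hc1

theorem displays_unique₃ {L : Type} {t : T L} (hn : (leafList t).Nodup) {x y z : L}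
    (h1 : Displays t x z y) (h2 : Displays t y z x) : False := by
  obtain ⟨-, -, -, -, -, -, s1, hs1, ha1, hb1, hc1⟩ := h1
  obtain ⟨-, -, -, -, -, -, s2, hs2, ha2, hb2, hc2⟩ := h2
  exact no_cross hn hs1 hs2 hb1 hb2 ha1 hc2 ha2 hc1


end Phylo

open Phylo in
/-- Every consistent set `R` of rooted triples on leaf set `L` is contained in a
strictly dense consistent set `R'` of rooted triples on `L`. -/
theorem exists_strictly_dense_superset {L : Type} (S : Set L)
    (hfin : S.Finite) (hcard : 3 ≤ S.ncard)
    (R : Set (Trip L)) (hR : ProperOn R S) (hcons : ConsistentOn R S) :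
    ∃ R' : Set (Trip L), R ⊆ R' ∧ StrictlyDense R' S ∧ ConsistentOn R' S := by
  obtain ⟨t, ⟨hphylo, hnodup⟩, hleaf, hdisp⟩ := hcons
  set t' := refine t with ht'
  have hleaf' : ∀ x, x ∈ leafList t' ↔ x ∈ S := by
    intro x; rw [ht', leafList_refine]; exact hleaf x
  have hnodup' : (leafList t').Nodup := by rw [ht', leafList_refine]; exact hnodup
  have hbin : BinaryT t' := refine_binary hphylo
  refine ⟨{r | DisplaysT t' r}, ?_, ⟨?_, ?_⟩, ?_⟩
  · intro r hr
    exact displays_refine (hdisp r hr)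
  · -- ProperOn
    intro r hr
    obtain ⟨h1, h2, h3, hx, hy, hz, -⟩ := hr
    exact ⟨(hleaf' r.a).1 hx, (hleaf' r.b).1 hy, (hleaf' r.c).1 hz, h1, h2, h3⟩
  · -- trichotomy
    intro x y z hx hy hz hxy hxz hyz
    have hmem : ∀ a b c : L, MemS {r | DisplaysT t' r} a b c ↔ Displays t' a b c := by
      intro a b c
      constructor
      · rintro (h | h)
        · exact h
        · exact displays_swap h
      · exact fun h => Or.inl h
    rw [hmem, hmem, hmem]
    have hex := binary_displays hbin hnodup' hxy hxz hyz
      ((hleaf' x).2 hx) ((hleaf' y).2 hy) ((hleaf' z).2 hz)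
    rcases hex with h | h | h
    · exact Or.inl ⟨h, fun h2 => displays_unique₁ hnodup' h h2,
        fun h2 => displays_unique₂ hnodup' h h2⟩
    · exact Or.inr (Or.inl ⟨fun h2 => displays_unique₁ hnodup' h2 h, h,
        fun h2 => displays_unique₃ hnodup' h h2⟩)
    · exact Or.inr (Or.inr ⟨fun h2 => displays_unique₂ hnodup' h2 h,
        fun h2 => displays_unique₃ hnodup' h2 h, h⟩)
  · exact ⟨t', ⟨binary_isPhylo hbin, hnodup'⟩, hleaf', fun r hr => hr⟩
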